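/- For every Λ > 0 there exists σ♯ ≥ σ* such that for all σ > σ♯, the hazard rate satisfies -∂_σ ln(1 - H(σ,Λ)) > 1/4, and consequently for all σ > σ♯, (1 - H(σ,Λ))/(1 - H(σ♯,Λ)) ≤ exp(-(σ - σ♯)/4). -/

import Mathlib

/-!
Put `s = √(2σ)`, `a = (σ - Λ) / s`, `b = (σ + Λ) / s` and `T z = ∫_z^∞ e^{-t²} dt`. Then
`√π (1 - H) = T a - e^{2Λ} T b`, `∂_σ H = h = Λ e^{-a²} / (√π σ s)` and `b² - a² = 2Λ`, so
the factor `e^{2Λ}` turns `e^{-b²}` into `e^{-a²}`. Bounding `T` by partial sums of its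
asymptotic series `e^{-z²} (1/(2z) - 1/(4z³) + 3/(8z⁵) - …)` gives
`√π (1 - H) ≈ e^{-a²} (1/(2a) - 1/(2b)) ≈ 2 √π h`, i.e. the hazard rate tends to `1/2`; with
explicit error terms, `0 < 1 - H < 4h` once `σ ≥ 3Λ + 18 + 14/Λ`. Integrating
`(log (1 - H))' < -1/4` from that point gives the decay bound.
-/

open Real MeasureTheory Set Filter Topology

noncomputable def fph (σ x : ℝ) : ℝ :=
  x * Real.exp (-(x - σ)^2 / (2*σ)) / Real.sqrt (2*Real.pi*σ^3)

noncomputable def erfc (z : ℝ) : ℝ :=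
  (2 / Real.sqrt Real.pi) * ∫ t in Set.Ioi z, Real.exp (-t^2)

noncomputable def fpH (σ x : ℝ) : ℝ :=
  (1/2) * (erfc ((x-σ)/Real.sqrt (2*σ)) + Real.exp (2*x) * erfc ((x+σ)/Real.sqrt (2*σ)))

noncomputable def kap (σ y x : ℝ) : ℝ :=
  Real.exp (-(y - x + σ)^2/(2*σ)) / Real.sqrt (2*Real.pi*σ) * (1 - Real.exp (-(2*x*y)/σ))

noncomputable def gaussTail (z : ℝ) : ℝ := ∫ t in Ioi z, exp (-t ^ 2)

lemma integrable_exp_neg_sq : Integrable fun t : ℝ => exp (-t ^ 2) := by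
  simpa using integrable_exp_neg_mul_sq one_pos

lemma gaussTail_neg_add_gaussTail (z : ℝ) : gaussTail (-z) + gaussTail z = √π := by
  have hneg : gaussTail (-z) = ∫ t in Iic z, exp (-t ^ 2) := by
    have h := integral_comp_neg_Ioi (-z) fun t => exp (-t ^ 2)
    simp only [neg_sq, neg_neg] at h
    exact h
  rw [hneg, gaussTail, intervalIntegral.integral_Iic_add_Ioi integrable_exp_neg_sq.integrableOn
    integrable_exp_neg_sq.integrableOn]
  simpa using integral_gaussian 1

lemma hasDerivAt_gaussTail (z : ℝ) : HasDerivAt gaussTail (-exp (-z ^ 2)) z := by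
  have hcont : Continuous fun t : ℝ => exp (-t ^ 2) := by fun_prop
  have heq : gaussTail = fun y => gaussTail 0 - ∫ t in (0 : ℝ)..y, exp (-t ^ 2) := by
    funext y
    rw [← intervalIntegral.integral_Ioi_sub_Ioi' integrable_exp_neg_sq.integrableOn
      integrable_exp_neg_sq.integrableOn, gaussTail, gaussTail, sub_sub_cancel]
  rw [heq]
  exact (intervalIntegral.integral_hasDerivAt_right integrable_exp_neg_sq.intervalIntegrable
    (hcont.stronglyMeasurableAtFilter _ _) hcont.continuousAt).const_sub _

lemma erfc_eq_gaussTail (z : ℝ) : erfc z = 2 / √π * gaussTail z := rfl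

lemma hasDerivAt_erfc (z : ℝ) : HasDerivAt erfc (-(2 / √π * exp (-z ^ 2))) z :=
  ((hasDerivAt_gaussTail z).const_mul (2 / √π)).congr_deriv (by ring)

noncomputable def millsLower (z : ℝ) : ℝ := 1 / (2 * z) - 1 / (4 * z ^ 3)

noncomputable def millsUpper (z : ℝ) : ℝ := millsLower z + 3 / (8 * z ^ 5)

section MillsComparison

variable {q q' : ℝ → ℝ} {z c : ℝ}

lemma hasDerivAt_neg_exp_neg_sq_mul (hq : HasDerivAt q (q' z) z) :
    HasDerivAt (fun t => -(exp (-t ^ 2) * q t)) (exp (-z ^ 2) * (2 * z * q z - q' z)) z := by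
  refine ((((hasDerivAt_pow 2 z).fun_neg).exp.fun_mul hq).fun_neg).congr_deriv ?_
  ring

lemma tendsto_exp_neg_sq_mul (hq : Tendsto q atTop (𝓝 c)) :
    Tendsto (fun t => exp (-t ^ 2) * q t) atTop (𝓝 0) := by
  have hexp : Tendsto (fun t : ℝ => exp (-t ^ 2)) atTop (𝓝 0) :=
    tendsto_exp_atBot.comp (tendsto_neg_atTop_atBot.comp (tendsto_pow_atTop two_ne_zero))
  simpa using hexp.mul hq

lemma gaussTail_le_of_hasDerivAt (hq : ∀ x ∈ Ici z, HasDerivAt q (q' x) x)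
    (hlim : Tendsto q atTop (𝓝 c)) (hle : ∀ x ∈ Ioi z, 1 ≤ 2 * x * q x - q' x) :
    gaussTail z ≤ exp (-z ^ 2) * q z := by
  have hF := fun x hx => hasDerivAt_neg_exp_neg_sq_mul (hq x hx)
  have hpos : ∀ x ∈ Ioi z, 0 ≤ exp (-x ^ 2) * (2 * x * q x - q' x) := fun x hx =>
    mul_nonneg (exp_pos _).le (zero_le_one.trans (hle x hx))
  have hF0 : Tendsto (fun t => -(exp (-t ^ 2) * q t)) atTop (𝓝 0) := by
    simpa using (tendsto_exp_neg_sq_mul hlim).neg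
  calc gaussTail z ≤ ∫ x in Ioi z, exp (-x ^ 2) * (2 * x * q x - q' x) :=
        setIntegral_mono_on integrable_exp_neg_sq.integrableOn
          (integrableOn_Ioi_deriv_of_nonneg' hF hpos hF0) measurableSet_Ioi
          fun x hx => le_mul_of_one_le_right (exp_pos _).le (hle x hx)
    _ = exp (-z ^ 2) * q z := by
        rw [integral_Ioi_of_hasDerivAt_of_nonneg' hF hpos hF0]; ring

lemma le_gaussTail_of_hasDerivAt (hq : ∀ x ∈ Ici z, HasDerivAt q (q' x) x)
    (hlim : Tendsto q atTop (𝓝 c)) (hnonneg : ∀ x ∈ Ioi z, 0 ≤ 2 * x * q x - q' x)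
    (hle : ∀ x ∈ Ioi z, 2 * x * q x - q' x ≤ 1) :
    exp (-z ^ 2) * q z ≤ gaussTail z := by
  have hF := fun x hx => hasDerivAt_neg_exp_neg_sq_mul (hq x hx)
  have hpos : ∀ x ∈ Ioi z, 0 ≤ exp (-x ^ 2) * (2 * x * q x - q' x) := fun x hx =>
    mul_nonneg (exp_pos _).le (hnonneg x hx)
  have hF0 : Tendsto (fun t => -(exp (-t ^ 2) * q t)) atTop (𝓝 0) := by
    simpa using (tendsto_exp_neg_sq_mul hlim).neg
  calc exp (-z ^ 2) * q z = ∫ x in Ioi z, exp (-x ^ 2) * (2 * x * q x - q' x) := by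
        rw [integral_Ioi_of_hasDerivAt_of_nonneg' hF hpos hF0]; ring
    _ ≤ gaussTail z :=
        setIntegral_mono_on (integrableOn_Ioi_deriv_of_nonneg' hF hpos hF0)
          integrable_exp_neg_sq.integrableOn measurableSet_Ioi
          fun x hx => mul_le_of_le_one_right (exp_pos _).le (hle x hx)

end MillsComparison

lemma gaussTail_le {z : ℝ} (hz : 0 < z) : gaussTail z ≤ exp (-z ^ 2) * millsUpper z := by
  set P : ℝ → ℝ := fun u => u / 2 - u ^ 3 / 4 + 3 * u ^ 5 / 8
  have hq : millsUpper = fun t => P t⁻¹ := by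
    funext t; simp only [millsUpper, millsLower, P]; ring
  have hP (u : ℝ) : HasDerivAt P (1 / 2 - 3 * u ^ 2 / 4 + 15 * u ^ 4 / 8) u :=
    ((((hasDerivAt_id u).div_const 2).sub ((hasDerivAt_pow 3 u).div_const 4)).add
      (((hasDerivAt_pow 5 u).const_mul 3).div_const 8)).congr_deriv (by ring)
  refine gaussTail_le_of_hasDerivAt (c := P 0)
    (q' := fun x => -1 / (2 * x ^ 2) + 3 / (4 * x ^ 4) - 15 / (8 * x ^ 6))
    (fun x hx => ?_) ?_ (fun x hx => ?_)
  · have hx : x ≠ 0 := (hz.trans_le hx).ne'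
    rw [hq]
    refine ((hP x⁻¹).comp x (hasDerivAt_inv hx)).congr_deriv ?_
    field_simp
    ring
  · rw [hq]
    exact ((by fun_prop : Continuous P).tendsto 0).comp tendsto_inv_atTop_zero
  · have hx : 0 < x := hz.trans hx
    have h : 2 * x * millsUpper x - (-1 / (2 * x ^ 2) + 3 / (4 * x ^ 4) - 15 / (8 * x ^ 6))
        = 1 + 15 / (8 * x ^ 6) := by
      rw [millsUpper, millsLower]; field_simp; ring
    rw [h]
    exact le_add_of_nonneg_right (by positivity)

lemma le_gaussTail {z : ℝ} (hz : 1 ≤ z) : exp (-z ^ 2) * millsLower z ≤ gaussTail z := by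
  set P : ℝ → ℝ := fun u => u / 2 - u ^ 3 / 4
  have hq : millsLower = fun t => P t⁻¹ := by
    funext t; simp only [millsLower, P]; ring
  have hP (u : ℝ) : HasDerivAt P (1 / 2 - 3 * u ^ 2 / 4) u :=
    (((hasDerivAt_id u).div_const 2).sub ((hasDerivAt_pow 3 u).div_const 4)).congr_deriv
      (by ring)
  have h (x : ℝ) (hx : x ≠ 0) : 2 * x * millsLower x - (-1 / (2 * x ^ 2) + 3 / (4 * x ^ 4))
      = 1 - 3 / (4 * x ^ 4) := by
    rw [millsLower]; field_simp; ring
  refine le_gaussTail_of_hasDerivAt (c := P 0)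
    (q' := fun x => -1 / (2 * x ^ 2) + 3 / (4 * x ^ 4))
    (fun x hx => ?_) ?_ (fun x hx => ?_) (fun x hx => ?_)
  · have hx : x ≠ 0 := (zero_lt_one.trans_le (hz.trans hx)).ne'
    rw [hq]
    refine ((hP x⁻¹).comp x (hasDerivAt_inv hx)).congr_deriv ?_
    field_simp
    ring
  · rw [hq]
    exact ((by fun_prop : Continuous P).tendsto 0).comp tendsto_inv_atTop_zero
  · have hx : 1 < x := hz.trans_lt hx
    rw [h x (by positivity), sub_nonneg, div_le_one (by positivity)]
    nlinarith [one_lt_pow₀ hx (n := 4) (by norm_num)]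
  · have hx : 0 < x := zero_lt_one.trans (hz.trans_lt hx)
    rw [h x hx.ne']
    exact sub_le_self _ (by positivity)

lemma exp_sq_sub_sq_mul_exp_neg_sq (a b : ℝ) :
    exp (b ^ 2 - a ^ 2) * exp (-b ^ 2) = exp (-a ^ 2) := by
  rw [← exp_add]; ring_nf

section TailDifference

variable {a b : ℝ}

lemma millsUpper_sub_millsLower_lt (ha : 0 < a) (hab : a ≤ b) (hb : b ≤ 2 * a)
    (hgap : 2 ≤ (b - a) * a ^ 3) : millsUpper a - millsLower b < 4 * (b - a) / (a + b) ^ 2 := by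
  rw [millsUpper, millsLower, millsLower]
  have hb0 : 0 < b := ha.trans_le hab
  have hcubes : 1 / (4 * b ^ 3) ≤ 1 / (4 * a ^ 3) := by gcongr
  have hfirst : 1 / (2 * a) - 1 / (2 * b) ≤ 9 * (b - a) / (4 * (a + b) ^ 2) := by
    rw [div_sub_div _ _ (by positivity) (by positivity),
      div_le_div_iff₀ (by positivity) (by positivity)]
    nlinarith [mul_nonneg (sub_nonneg.2 hab)
      (mul_nonneg (sub_nonneg.2 hb) (by linarith : 0 ≤ 2 * b - a))]
  have hrest : 3 / (8 * a ^ 5) < 7 * (b - a) / (4 * (a + b) ^ 2) := by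
    rw [div_lt_div_iff₀ (by positivity) (by positivity)]
    have hsum : (a + b) ^ 2 ≤ 9 * a ^ 2 := by nlinarith
    nlinarith [pow_pos ha 2]
  have hsplit : 4 * (b - a) / (a + b) ^ 2
      = 9 * (b - a) / (4 * (a + b) ^ 2) + 7 * (b - a) / (4 * (a + b) ^ 2) := by
    field_simp; ring
  linarith

lemma millsUpper_lt_millsLower (ha : 2 ≤ a) (hab : a ≤ b) (hgap : 2 ≤ (b - a) * a ^ 3) :
    millsUpper b < millsLower a := by
  rw [millsUpper, millsLower, millsLower]
  have ha0 : 0 < a := by linarith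
  have hb0 : 0 < b := ha0.trans_le hab
  have hcubes : 1 / (4 * a ^ 3) - 1 / (4 * b ^ 3) ≤ 3 * (b - a) / (16 * a * b) := by
    rw [div_sub_div _ _ (by positivity) (by positivity),
      div_le_div_iff₀ (by positivity) (by positivity)]
    have hsym : 4 * (a ^ 2 + a * b + b ^ 2) ≤ 3 * a ^ 2 * b ^ 2 := by
      nlinarith [mul_le_mul_of_nonneg_right (show 4 ≤ a ^ 2 by nlinarith) (sq_nonneg b)]
    nlinarith [mul_nonneg (mul_nonneg (mul_pos ha0 hb0).le (sub_nonneg.2 hab))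
      (sub_nonneg.2 hsym)]
  have hlast : 3 / (8 * b ^ 5) < 5 * (b - a) / (16 * a * b) := by
    rw [div_lt_div_iff₀ (by positivity) (by positivity)]
    have hcube : a ^ 3 ≤ b ^ 3 := by gcongr
    have hgap' : 2 * b ^ 2 ≤ (b - a) * b ^ 5 := by
      nlinarith [mul_le_mul_of_nonneg_left hcube (mul_nonneg (sub_nonneg.2 hab) (sq_nonneg b))]
    nlinarith
  have hsplit : 1 / (2 * a) - 1 / (2 * b)
      = 3 * (b - a) / (16 * a * b) + 5 * (b - a) / (16 * a * b) := by
    field_simp; ring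
  linarith

lemma gaussTail_sub_exp_mul_gaussTail_pos (ha : 2 ≤ a) (hab : a ≤ b)
    (hgap : 2 ≤ (b - a) * a ^ 3) : 0 < gaussTail a - exp (b ^ 2 - a ^ 2) * gaussTail b := by
  have hb : 0 < b := by linarith
  have hTa := le_gaussTail (z := a) (by linarith)
  have hTb := mul_le_mul_of_nonneg_left (gaussTail_le hb) (exp_pos (b ^ 2 - a ^ 2)).le
  rw [← mul_assoc, exp_sq_sub_sq_mul_exp_neg_sq] at hTb
  have := mul_lt_mul_of_pos_left (millsUpper_lt_millsLower ha hab hgap) (exp_pos (-a ^ 2))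
  linarith

lemma gaussTail_sub_exp_mul_gaussTail_lt (ha : 0 < a) (hab : a ≤ b) (hb : b ≤ 2 * a)
    (hgap : 2 ≤ (b - a) * a ^ 3) :
    gaussTail a - exp (b ^ 2 - a ^ 2) * gaussTail b
      < exp (-a ^ 2) * (4 * (b - a) / (a + b) ^ 2) := by
  have ha1 : 1 ≤ a := by
    by_contra! h
    nlinarith [pow_le_one₀ ha.le h.le (n := 3),
      mul_le_mul_of_nonneg_left (show b - a ≤ a by linarith) (pow_pos ha 3).le]
  have hTa := gaussTail_le ha
  have hTb :=
    mul_le_mul_of_nonneg_left (le_gaussTail (ha1.trans hab)) (exp_pos (b ^ 2 - a ^ 2)).le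
  rw [← mul_assoc, exp_sq_sub_sq_mul_exp_neg_sq] at hTb
  have := mul_lt_mul_of_pos_left (millsUpper_sub_millsLower_lt ha hab hb hgap) (exp_pos (-a ^ 2))
  linarith

end TailDifference

lemma HasDerivAt.div_sqrt_two_mul {p : ℝ → ℝ} {p' σ : ℝ} (hp : HasDerivAt p p' σ)
    (hσ : 0 < σ) :
    HasDerivAt (fun s => p s / √(2 * s)) ((2 * σ * p' - p σ) / (2 * σ * √(2 * σ))) σ := by
  have hs : 0 < √(2 * σ) := sqrt_pos.2 (by positivity)
  have hsqrt : HasDerivAt (fun s => √(2 * s)) (2 / (2 * √(2 * σ))) σ := by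
    simpa using ((hasDerivAt_id σ).const_mul 2).sqrt (by positivity)
  refine (hp.div hsqrt hs.ne').congr_deriv ?_
  field_simp
  rw [sq_sqrt (by positivity)]
  ring

lemma fph_eq (x : ℝ) {σ : ℝ} (hσ : 0 < σ) :
    fph σ x = exp (-((σ - x) / √(2 * σ)) ^ 2) * (x / (σ * √(2 * σ))) / √π := by
  have hs2 : √(2 * σ) ^ 2 = 2 * σ := sq_sqrt (by positivity)
  have hsqrt : √(2 * π * σ ^ 3) = √π * (σ * √(2 * σ)) := by
    rw [show 2 * π * σ ^ 3 = π * (σ ^ 2 * (2 * σ)) by ring, sqrt_mul pi_pos.le,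
      sqrt_mul (sq_nonneg σ), sqrt_sq hσ.le]
  rw [fph, hsqrt, div_pow, hs2, neg_div, ← neg_sub σ x, neg_sq]
  field_simp

lemma hasDerivAt_fpH (x : ℝ) {σ : ℝ} (hσ : 0 < σ) :
    HasDerivAt (fun s => fpH s x) (fph σ x) σ := by
  have hs2 : √(2 * σ) ^ 2 = 2 * σ := sq_sqrt (by positivity)
  have hu := ((hasDerivAt_id σ).const_sub x).div_sqrt_two_mul hσ
  have hv := ((hasDerivAt_id σ).const_add x).div_sqrt_two_mul hσ
  have h := (((hasDerivAt_erfc _).comp σ hu).add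
    (((hasDerivAt_erfc _).comp σ hv).const_mul (exp (2 * x)))).const_mul (1 / 2)
  refine h.congr_deriv ?_
  have hexp₁ : exp (-((x - σ) / √(2 * σ)) ^ 2) = exp (-((σ - x) / √(2 * σ)) ^ 2) := by
    rw [← neg_sub, neg_div, neg_sq]
  have hexp₂ :
      exp (2 * x) * exp (-((x + σ) / √(2 * σ)) ^ 2) = exp (-((σ - x) / √(2 * σ)) ^ 2) := by
    rw [← exp_add, div_pow, div_pow, hs2]; congr 1; field_simp; ring
  simp only [id, fph_eq x hσ]
  rw [hexp₁]
  linear_combination (-(σ - x) / (√π * (2 * σ * √(2 * σ)))) * hexp₂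

lemma one_sub_fpH_eq (σ x : ℝ) :
    1 - fpH σ x = (gaussTail ((σ - x) / √(2 * σ))
      - exp (2 * x) * gaussTail ((σ + x) / √(2 * σ))) / √π := by
  have hrefl := gaussTail_neg_add_gaussTail ((σ - x) / √(2 * σ))
  rw [← neg_div, neg_sub] at hrefl
  simp only [fpH, erfc_eq_gaussTail, add_comm x σ]
  field_simp
  linear_combination -hrefl

lemma one_sub_fpH_pos_and_lt_four_mul_fph {Λ σ : ℝ} (hΛ : 0 < Λ) (h3 : 3 * Λ ≤ σ)
    (h18 : 18 ≤ σ) (h14 : 14 ≤ Λ * σ) : 0 < 1 - fpH σ Λ ∧ 1 - fpH σ Λ < 4 * fph σ Λ := by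
  have hσ : 0 < σ := by linarith
  set s := √(2 * σ) with hs_def
  have hs : 0 < s := sqrt_pos.2 (by positivity)
  have hs2 : s ^ 2 = 2 * σ := sq_sqrt (by positivity)
  set a := (σ - Λ) / s with ha_def
  set b := (σ + Λ) / s with hb_def
  have hsum : a + b = s := by
    rw [ha_def, hb_def, ← add_div, div_eq_iff hs.ne', ← sq, hs2]; ring
  have hdiff : b - a = 2 * Λ / s := by
    rw [ha_def, hb_def, ← sub_div]; ring
  have hexp : exp (2 * Λ) = exp (b ^ 2 - a ^ 2) := by
    rw [sq_sub_sq, add_comm b a, hsum, hdiff, mul_div_cancel₀ _ hs.ne']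
  have hfph : 4 * fph σ Λ = exp (-a ^ 2) * (4 * (b - a) / (a + b) ^ 2) / √π := by
    rw [fph_eq Λ hσ, ← hs_def, ← ha_def, hsum, hdiff]
    field_simp
    linarith
  have ha : 2 ≤ a := by
    rw [ha_def, le_div_iff₀ hs]; nlinarith
  have hab : a ≤ b := by
    rw [ha_def, hb_def]; gcongr; linarith
  have hb : b ≤ 2 * a := by
    rw [ha_def, hb_def, ← mul_div_assoc]; gcongr; linarith
  have hgap : 2 ≤ (b - a) * a ^ 3 := by
    have hcube : (2 * σ / 3) ^ 3 ≤ (σ - Λ) ^ 3 := by gcongr; linarith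
    have hs4 : s ^ 4 = 4 * σ ^ 2 := by rw [show s ^ 4 = (s ^ 2) ^ 2 by ring, hs2]; ring
    rw [hdiff, ha_def, div_pow, div_mul_div_comm, ← pow_succ', hs4, le_div_iff₀ (by positivity)]
    nlinarith [mul_le_mul_of_nonneg_left hcube hΛ.le]
  rw [one_sub_fpH_eq, hexp, hfph]
  have hpi : 0 < √π := sqrt_pos.2 pi_pos
  exact ⟨div_pos (gaussTail_sub_exp_mul_gaussTail_pos ha hab hgap) hpi,
    div_lt_div_of_pos_right (gaussTail_sub_exp_mul_gaussTail_lt (by linarith) hab hb hgap) hpi⟩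

lemma div_le_exp_of_hasDerivAt_log {f g : ℝ → ℝ} {c x₀ y : ℝ}
    (hderiv : ∀ x ∈ Ici x₀, HasDerivAt (fun s => log (f s)) (g x) x)
    (hg : ∀ x ∈ Ici x₀, g x ≤ -c) (hf₀ : 0 < f x₀) (hf : 0 < f y) (hy : x₀ ≤ y) :
    f y / f x₀ ≤ exp (-c * (y - x₀)) := by
  have hlog := (convex_Ici x₀).image_sub_le_mul_sub_of_deriv_le
    (fun x hx => (hderiv x hx).continuousAt.continuousWithinAt)
    (fun x hx => (hderiv x (interior_subset hx)).differentiableAt.differentiableWithinAt)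
    (fun x hx => (hderiv x (interior_subset hx)).deriv ▸ hg x (interior_subset hx))
    x₀ self_mem_Ici y hy hy
  rw [← exp_log hf, ← exp_log hf₀, ← exp_sub]
  exact exp_le_exp.2 hlog

theorem hazard_rate_eventually_above_quarter (Λ : ℝ) (hΛ : 0 < Λ) :
    ∃ σs : ℝ, (-3 + Real.sqrt (9 + 4*Λ^2))/2 ≤ σs ∧
      (∀ σ : ℝ, σs < σ → 1/4 < -(deriv (fun s => Real.log (1 - fpH s Λ)) σ)) ∧
      (∀ σ : ℝ, σs < σ →
        (1 - fpH σ Λ) / (1 - fpH σs Λ) ≤ Real.exp (-(σ - σs)/4)) := by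
  set σs := 3 * Λ + 18 + 14 / Λ
  have h14Λ : 0 < 14 / Λ := by positivity
  have hbounds (σ : ℝ) (hσ : σs ≤ σ) : 0 < 1 - fpH σ Λ ∧ 1 - fpH σ Λ < 4 * fph σ Λ := by
    have h14 : 14 ≤ Λ * σ :=
      calc 14 = Λ * (14 / Λ) := (mul_div_cancel₀ _ hΛ.ne').symm
        _ ≤ Λ * σ := by gcongr; linarith
    exact one_sub_fpH_pos_and_lt_four_mul_fph hΛ (by linarith) (by linarith) h14
  have hlog (σ : ℝ) (hσ : σ ∈ Ici σs) :
      HasDerivAt (fun s => log (1 - fpH s Λ)) (-(fph σ Λ / (1 - fpH σ Λ))) σ :=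
    (((hasDerivAt_fpH Λ (by linarith [mem_Ici.1 hσ])).const_sub 1).log
      (hbounds σ hσ).1.ne').congr_deriv (neg_div _ _)
  have hhazard (σ : ℝ) (hσ : σ ∈ Ici σs) : 1 / 4 < fph σ Λ / (1 - fpH σ Λ) := by
    obtain ⟨hpos, hlt⟩ := hbounds σ hσ
    rw [lt_div_iff₀ hpos]; linarith
  refine ⟨σs, ?_, fun σ hσ => ?_, fun σ hσ => ?_⟩
  · have : √(9 + 4 * Λ ^ 2) ≤ 3 + 2 * Λ :=
      sqrt_le_iff.2 ⟨by positivity, by nlinarith⟩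
    linarith
  · rw [(hlog σ hσ.le).deriv, neg_neg]
    exact hhazard σ hσ.le
  · have := div_le_exp_of_hasDerivAt_log hlog (fun x hx => neg_le_neg (hhazard x hx).le)
      (hbounds σs le_rfl).1 (hbounds σ hσ.le).1 hσ.le
    rwa [neg_mul, one_div_mul_eq_div, ← neg_div] at this
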